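/- Assume condition (M) with exponent ν > 0 holds, and let a be a nonzero complex number with Λq^m ≠ a for every multi-index m. Then there exists ν′ > 0 such that for all multi-indices m > p one has s_m·min(ε_m(a), ε_p(a)) < 2^{ν′+1}·(|m|−|p|)^{ν′} and s_p·min(ε_m(a), ε_p(a)) < 2^{ν′+1}·(|m|−|p|)^{ν′}. -/

import Mathlib

/-- `s_m = max(1, |q₁|^{m₁}⋯|q_s|^{m_s})`. -/
noncomputable def smax (s : ℕ) (q : Fin s → ℂ) (m : Fin s → ℕ) : ℝ :=
  max 1 (∏ i, ‖q i‖ ^ m i)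

/-- `ε_m(a) = 1/|Λ q^m − a|`. -/
noncomputable def eps (s : ℕ) (Λ : ℂ) (q : Fin s → ℂ) (a : ℂ) (m : Fin s → ℕ) : ℝ :=
  1 / ‖Λ * ∏ i, q i ^ m i - a‖

/-!
Write `m = p + d` with `k = |d| ≥ 1` and `δ = 2^{-ν} k^{-ν}`. Since
`Λq^m - Λq^p = Λq^p (q^d - 1) = -Λq^m (q^{-d} - 1)`, condition (M) gives, for `x = m` and `x = p`,
`|Λ| |q^x| δ ≤ |Λq^m - a| + |Λq^p - a| ≤ 2 max(|Λq^m - a|, |Λq^p - a|)`.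
This bounds `|q^x| · min(ε_m, ε_p)` by `2 / (|Λ| δ)`. The term `1 · min(ε_m, ε_p)` is bounded the
same way when `|Λq^x| ≥ |a|/2`, and otherwise through `|Λq^x - a| ≥ |a| - |Λq^x| > |a|/2`.
Hence both products are at most `4 · 2^ν k^ν / min(|Λ|, |a|)`, which is below `2^{ν'+1} k^{ν'}`
as soon as `ν' ≥ ν` and `2^{ν'+1}` exceeds the constant.
-/

lemma min_mul_max_one_mul_le_four_mul_max {L α Q δ A B : ℝ} (hL : 0 ≤ L) (hα : 0 ≤ α)
    (hQ : 0 ≤ Q) (hδ₀ : 0 ≤ δ) (hδ₁ : δ ≤ 1) (hsum : L * Q * δ ≤ A + B)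
    (hA : α - L * Q ≤ A) :
    min L α * max 1 Q * δ ≤ 4 * max A B := by
  have hAM := le_max_left A B
  have hBM := le_max_right A B
  have hc₀ : 0 ≤ min L α := le_min hL hα
  have hcδ : min L α * δ ≤ α * δ := mul_le_mul_of_nonneg_right (min_le_right L α) hδ₀
  have hone : min L α * δ ≤ 4 * max A B := by
    rcases le_or_gt α (2 * (L * Q)) with hLQ | hLQ
    · have := mul_le_mul_of_nonneg_right hLQ hδ₀
      linarith
    · have := mul_le_of_le_one_right hα hδ₁
      linarith
  have hQ' : min L α * Q * δ ≤ 4 * max A B := by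
    have := mul_le_mul_of_nonneg_right (min_le_left L α) (mul_nonneg hQ hδ₀)
    nlinarith [mul_nonneg hc₀ hδ₀]
  rw [mul_comm (min L α), mul_assoc, max_mul_of_nonneg _ _ (mul_nonneg hc₀ hδ₀)]
  exact max_le (by linarith) (by linarith)

lemma max_one_mul_min_one_div_le {L α Q δ A B : ℝ} (hL : 0 < L) (hα : 0 < α)
    (hQ : 0 ≤ Q) (hA₀ : 0 < A) (hB₀ : 0 < B) (hδ₀ : 0 < δ) (hδ₁ : δ ≤ 1)
    (hsum : L * Q * δ ≤ A + B) (hA : α - L * Q ≤ A) :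
    max 1 Q * min (1 / A) (1 / B) ≤ 4 / (min L α * δ) := by
  have hmin : min (1 / A) (1 / B) = 1 / max A B := by
    rcases le_total A B with h | h
    · rw [max_eq_right h, min_eq_right (one_div_le_one_div_of_le hA₀ h)]
    · rw [max_eq_left h, min_eq_left (one_div_le_one_div_of_le hB₀ h)]
  rw [hmin, mul_one_div, div_le_div_iff₀ (hA₀.trans_le (le_max_left A B))
    (mul_pos (lt_min hL hα) hδ₀)]
  have := min_mul_max_one_mul_le_four_mul_max hL.le hα.le hQ hδ₀.le hδ₁ hsum hA
  linarith

lemma exists_two_rpow_bound (C : ℝ) {ν : ℝ} (hν : 0 < ν) :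
    ∃ ν' > (0 : ℝ), ∀ k : ℝ, 1 ≤ k → C * k ^ ν < 2 ^ (ν' + 1) * k ^ ν' := by
  obtain ⟨n, hn⟩ := pow_unbounded_of_one_lt C one_lt_two
  refine ⟨ν + n, by positivity, fun k hk => ?_⟩
  have hC : C < 2 ^ (ν + n + 1) := by
    refine hn.trans_le ?_
    rw [← Real.rpow_natCast]
    exact Real.rpow_le_rpow_of_exponent_le one_le_two (by linarith)
  calc C * k ^ ν < 2 ^ (ν + n + 1) * k ^ ν :=
        mul_lt_mul_of_pos_right hC (Real.rpow_pos_of_pos (zero_lt_one.trans_le hk) ν)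
    _ ≤ 2 ^ (ν + n + 1) * k ^ (ν + n) := by
        gcongr
        exact le_add_of_nonneg_right n.cast_nonneg

section NormedField

variable {𝕜 : Type*} [NormedField 𝕜]

lemma norm_mul_norm_div_sub_one_le (Λ a : 𝕜) {x : 𝕜} (hx : x ≠ 0) (y : 𝕜) :
    ‖Λ * x‖ * ‖y / x - 1‖ ≤ ‖Λ * x - a‖ + ‖Λ * y - a‖ := by
  rw [← norm_mul, mul_sub, mul_one, mul_assoc, mul_div_cancel₀ y hx, norm_sub_rev]
  simpa using norm_sub_le (Λ * x - a) (Λ * y - a)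

lemma max_one_norm_mul_min_le {Λ a x y : 𝕜} {δ : ℝ} (hΛ : Λ ≠ 0) (ha : a ≠ 0) (hx : x ≠ 0)
    (hxa : Λ * x ≠ a) (hya : Λ * y ≠ a) (hδ₀ : 0 < δ) (hδ₁ : δ ≤ 1) (hδ : δ ≤ ‖y / x - 1‖) :
    max 1 ‖x‖ * min (1 / ‖Λ * x - a‖) (1 / ‖Λ * y - a‖) ≤ 4 / (min ‖Λ‖ ‖a‖ * δ) := by
  refine max_one_mul_min_one_div_le (norm_pos_iff.2 hΛ) (norm_pos_iff.2 ha) (norm_nonneg x)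
    (norm_pos_iff.2 (sub_ne_zero.2 hxa)) (norm_pos_iff.2 (sub_ne_zero.2 hya)) hδ₀ hδ₁ ?_ ?_
  · calc ‖Λ‖ * ‖x‖ * δ ≤ ‖Λ * x‖ * ‖y / x - 1‖ := by rw [norm_mul]; gcongr
      _ ≤ ‖Λ * x - a‖ + ‖Λ * y - a‖ := norm_mul_norm_div_sub_one_le Λ a hx y
  · rw [← norm_mul, norm_sub_rev]
    exact norm_sub_norm_le a (Λ * x)

end NormedField

section Monomial

variable {ι : Type*} [Fintype ι]

lemma prod_pow_add_eq_mul {M : Type*} [CommMonoid M] (q : ι → M) (p d : ι → ℕ) :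
    ∏ i, q i ^ (p + d) i = (∏ i, q i ^ p i) * ∏ i, q i ^ d i := by
  simp only [Pi.add_apply, pow_add, Finset.prod_mul_distrib]

lemma prod_zpow_neg_eq_inv {G : Type*} [DivisionCommMonoid G] (q : ι → G) (d : ι → ℕ) :
    ∏ i, q i ^ (-(d i : ℤ)) = (∏ i, q i ^ d i)⁻¹ := by
  simp only [zpow_neg, zpow_natCast, Finset.prod_inv_distrib]

end Monomial

lemma smax_eq_max_one_norm_prod (s : ℕ) (q : Fin s → ℂ) (m : Fin s → ℕ) :
    smax s q m = max 1 ‖∏ i, q i ^ m i‖ := by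
  simp [smax, norm_prod, norm_pow]

theorem stmt5_general (s : ℕ) (Λ : ℂ) (hΛ : Λ ≠ 0) (q : Fin s → ℂ) (hq : ∀ i, q i ≠ 0)
    (ν : ℝ) (hν : 0 < ν)
    (hM : ∀ m : Fin s → ℕ, m ≠ 0 →
      ‖∏ i, q i ^ m i - 1‖ > (2 : ℝ) ^ (-ν) * ((∑ i, m i : ℕ) : ℝ) ^ (-ν) ∧
      ‖∏ i, q i ^ (-(m i : ℤ)) - 1‖ > (2 : ℝ) ^ (-ν) * ((∑ i, m i : ℕ) : ℝ) ^ (-ν))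
    (a : ℂ) (ha : a ≠ 0) (hne : ∀ m : Fin s → ℕ, Λ * ∏ i, q i ^ m i ≠ a) :
    ∃ ν' > (0 : ℝ), ∀ m p : Fin s → ℕ, (∀ i, p i ≤ m i) → (∑ i, p i) < (∑ i, m i) →
      smax s q m * min (eps s Λ q a m) (eps s Λ q a p) <
        (2 : ℝ) ^ (ν' + 1) * (((∑ i, m i : ℕ) : ℝ) - ((∑ i, p i : ℕ) : ℝ)) ^ ν' ∧
      smax s q p * min (eps s Λ q a m) (eps s Λ q a p) <
        (2 : ℝ) ^ (ν' + 1) * (((∑ i, m i : ℕ) : ℝ) - ((∑ i, p i : ℕ) : ℝ)) ^ ν' := by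
  obtain ⟨ν', hν'₀, hν'⟩ := exists_two_rpow_bound (4 * 2 ^ ν / min ‖Λ‖ ‖a‖) hν
  refine ⟨ν', hν'₀, fun m p hpm hlt => ?_⟩
  obtain ⟨d, rfl⟩ := exists_add_of_le (show p ≤ m from hpm)
  have hd : d ≠ 0 := by rintro rfl; simp at hlt
  obtain ⟨hM₁, hM₂⟩ := hM d hd
  simp only [Pi.add_apply, Finset.sum_add_distrib, Nat.cast_add, add_sub_cancel_left] at hlt ⊢
  set k : ℝ := ((∑ i, d i : ℕ) : ℝ)
  have hk : 1 ≤ k := Nat.one_le_cast.2 (by omega)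
  set δ : ℝ := 2 ^ (-ν) * k ^ (-ν)
  have hδ₁ : δ ≤ 1 := mul_le_one₀ (Real.rpow_le_one_of_one_le_of_nonpos one_le_two (by linarith))
    (by positivity) (Real.rpow_le_one_of_one_le_of_nonpos hk (by linarith))
  have hbound : 4 / (min ‖Λ‖ ‖a‖ * δ) < 2 ^ (ν' + 1) * k ^ ν' := by
    convert hν' k hk using 1
    simp only [δ, Real.rpow_neg zero_le_two, Real.rpow_neg (zero_le_one.trans hk)]
    field_simp
  have hP : ∏ i, q i ^ p i ≠ 0 := Finset.prod_ne_zero_iff.2 fun i _ => pow_ne_zero _ (hq i)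
  have hD : ∏ i, q i ^ d i ≠ 0 := Finset.prod_ne_zero_iff.2 fun i _ => pow_ne_zero _ (hq i)
  have hne_add := hne (p + d)
  simp only [smax_eq_max_one_norm_prod, eps, prod_pow_add_eq_mul] at hne_add ⊢
  constructor
  · refine (max_one_norm_mul_min_le hΛ ha (mul_ne_zero hP hD) hne_add (hne p) (by positivity) hδ₁
      ?_).trans_lt hbound
    rw [div_mul_cancel_left₀ hP, ← prod_zpow_neg_eq_inv]
    exact hM₂.le
  · rw [min_comm]
    refine (max_one_norm_mul_min_le hΛ ha hP (hne p) hne_add (by positivity) hδ₁ ?_).trans_lt hbound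
    rw [mul_div_cancel_left₀ _ hP]
    exact hM₁.le

/-- Lemma 3 of the paper. -/
theorem stmt5 (s : ℕ) (hs : 1 ≤ s) (Λ : ℂ) (hΛ : Λ ≠ 0) (q : Fin s → ℂ) (hq : ∀ i, q i ≠ 0)
    (ν : ℝ) (hν : 0 < ν)
    (hM : ∀ m : Fin s → ℕ, m ≠ 0 →
      ‖∏ i, q i ^ m i - 1‖ > (2 : ℝ) ^ (-ν) * ((∑ i, m i : ℕ) : ℝ) ^ (-ν) ∧
      ‖∏ i, q i ^ (-(m i : ℤ)) - 1‖ > (2 : ℝ) ^ (-ν) * ((∑ i, m i : ℕ) : ℝ) ^ (-ν))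
    (a : ℂ) (ha : a ≠ 0) (hne : ∀ m : Fin s → ℕ, Λ * ∏ i, q i ^ m i ≠ a) :
    ∃ ν' > (0 : ℝ), ∀ m p : Fin s → ℕ, (∀ i, p i ≤ m i) → (∑ i, p i) < (∑ i, m i) →
      smax s q m * min (eps s Λ q a m) (eps s Λ q a p) <
        (2 : ℝ) ^ (ν' + 1) * (((∑ i, m i : ℕ) : ℝ) - ((∑ i, p i : ℕ) : ℝ)) ^ ν' ∧
      smax s q p * min (eps s Λ q a m) (eps s Λ q a p) <
        (2 : ℝ) ^ (ν' + 1) * (((∑ i, m i : ℕ) : ℝ) - ((∑ i, p i : ℕ) : ℝ)) ^ ν' :=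
  stmt5_general s Λ hΛ q hq ν hν hM a ha hne
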